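/- Asymptotic equivalence reduction (Theorem 1): let (e_i^c(t), e_{ij}^c(t), E_{ij}^c(t)) be nonnegative real sequences (interpreted as the expected values E[ñ_i^c(t)], E[ñ_{ij}^c(t)], E[Ñ_{ij}^c(t)] of the stochastic system X̃) that satisfy exactly the recurrence equations of system X: e_{ij}^c(t+1) = e_i^c(t)·P_{ij}^c(t) where P_{ij}^c(t) is computed from the dominations E_{ij}^q(t), E_{ji}^q(t); e_i^c(t+1) = Σ_j e_{ji}^c(t+1) + ρ_i^c · max(0, e(0) − e(t)) with e(t) = Σ_{i,c} e_i^c(t); E_{ij}^c(t+1) = E_{ij}^c(t) + e_{ij}^c(t+1); and e_{ij}^c(0) = 0, E_{ij}^c(0) = 0. Let κ > 0 and let (n_i^c(t), n_{ij}^c(t), N_{ij}^c(t)) be the trajectory of system X with initial condition n_i^c(0) = κ · e_i^c(0). Then for all t ≥ 0, all vertices i, j, and all classes c: n_i^c(t) = κ · e_i^c(t), n_{ij}^c(t) = κ · e_{ij}^c(t), and N_{ij}^c(t) = κ · E_{ij}^c(t). -/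

import Mathlib

/-!
System X: a deterministic discrete-time particle-competition system on a finite
undirected graph with `C` classes, edge weights `a`, labels on a subset of
vertices, survival parameter `lam` and generation rates `ρ`.
-/

open Finset

/-- Parameters of system X: edge weights, labels (`none` = unlabeled),
the parameter `λ`, and the generation rates `ρ`. -/
structure SysParams (V : Type*) [Fintype V] (C : ℕ) where
  a : V → V → ℝ
  label : V → Option (Fin C)
  lam : ℝ
  ρ : V → Fin C → ℝ
  a_nonneg : ∀ i j, 0 ≤ a i j
  a_symm : ∀ i j, a i j = a j i
  deg_pos : ∀ i, 0 < ∑ j, a i j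
  lam_nonneg : 0 ≤ lam
  lam_le_one : lam ≤ 1
  ρ_nonneg : ∀ i c, 0 ≤ ρ i c
  C_pos : 0 < C

variable {V : Type*} [Fintype V] {C : ℕ}

/-- The submission level `S_{ij}^c` computed from cumulative edge dominations `Nd`. -/
noncomputable def submission (Nd : V → V → Fin C → ℝ) (i j : V) (c : Fin C) : ℝ :=
  if 0 < ∑ q, (Nd i j q + Nd j i q) then
    1 - (Nd i j c + Nd j i c) / ∑ q, (Nd i j q + Nd j i q)
  else 1 - 1 / C

/-- The transition function `P_{ij}^c`: zero into sinks of a rival class, otherwise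
`(a_{ij}/d_i)(1 - λ S_{ij}^c)`. -/
noncomputable def transition (P : SysParams V C) (Nd : V → V → Fin C → ℝ)
    (i j : V) (c : Fin C) : ℝ :=
  if ∀ y, P.label j = some y → y = c then
    (P.a i j / ∑ k, P.a i k) * (1 - P.lam * submission Nd i j c)
  else 0

/-- A state trajectory of system X: `n t i c` = class-`c` particles at vertex `i`,
`nij t i j c` = class-`c` particles that moved from `i` to `j` at time `t`,
`Nd t i j c` = cumulative class-`c` edge domination. -/
structure Traj (V : Type*) [Fintype V] (C : ℕ) where
  n : ℕ → V → Fin C → ℝ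
  nij : ℕ → V → V → Fin C → ℝ
  Nd : ℕ → V → V → Fin C → ℝ

/-- Total number of particles at time `t`. -/
noncomputable def Traj.total (X : Traj V C) (t : ℕ) : ℝ := ∑ i, ∑ c, X.n t i c

/-- `X` is a trajectory of system X with parameters `P`: the initial conditions
`n_{ij}^c(0) = 0`, `N_{ij}^c(0) = 0`, `n_i^c(0) ≥ 0` and the update equations hold. -/
noncomputable def IsTrajectory (P : SysParams V C) (X : Traj V C) : Prop :=
  (∀ i j c, X.nij 0 i j c = 0) ∧
  (∀ i j c, X.Nd 0 i j c = 0) ∧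
  (∀ i c, 0 ≤ X.n 0 i c) ∧
  (∀ t i j c, X.nij (t + 1) i j c = X.n t i c * transition P (X.Nd t) i j c) ∧
  (∀ t i c, X.n (t + 1) i c =
    (∑ j, X.nij (t + 1) j i c) + P.ρ i c * max 0 (X.total 0 - X.total t)) ∧
  (∀ t i j c, X.Nd (t + 1) i j c = X.Nd t i j c + X.nij (t + 1) i j c)

/-!
Every update rule of system X is positively homogeneous of degree one in the state: the
submission only sees ratios of dominations, and `max 0 (κ x) = κ max 0 x` for `κ > 0`. Hence
`κ • E` is again a trajectory, and since a trajectory is determined by its initial particle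
counts, it coincides with `X`.
-/

omit [Fintype V] in
lemma submission_smul {κ : ℝ} (hκ : 0 < κ) (Nd : V → V → Fin C → ℝ) :
    submission (κ • Nd) = submission Nd := by
  funext i j c
  have hsum : ∑ q, ((κ • Nd) i j q + (κ • Nd) j i q) = κ * ∑ q, (Nd i j q + Nd j i q) := by
    simp only [Pi.smul_apply, smul_eq_mul, ← mul_add, Finset.mul_sum]
  rw [submission, submission, hsum]
  simp only [mul_pos_iff_of_pos_left hκ, Pi.smul_apply, smul_eq_mul, ← mul_add, mul_div_mul_left _ _ hκ.ne']

lemma transition_smul (P : SysParams V C) {κ : ℝ} (hκ : 0 < κ) (Nd : V → V → Fin C → ℝ) :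
    transition P (κ • Nd) = transition P Nd := by
  funext i j c
  simp only [transition, submission_smul hκ]

namespace Traj

instance : SMul ℝ (Traj V C) := ⟨fun κ X => ⟨κ • X.n, κ • X.nij, κ • X.Nd⟩⟩

@[simp] lemma smul_n (κ : ℝ) (X : Traj V C) : (κ • X).n = κ • X.n := rfl

@[simp] lemma smul_nij (κ : ℝ) (X : Traj V C) : (κ • X).nij = κ • X.nij := rfl

@[simp] lemma smul_Nd (κ : ℝ) (X : Traj V C) : (κ • X).Nd = κ • X.Nd := rfl

lemma total_smul (κ : ℝ) (X : Traj V C) (t : ℕ) : (κ • X).total t = κ * X.total t := by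
  simp only [total, smul_n, Pi.smul_apply, smul_eq_mul, Finset.mul_sum]

end Traj

namespace IsTrajectory

variable {P : SysParams V C} {X Y : Traj V C}

lemma smul (hX : IsTrajectory P X) {κ : ℝ} (hκ : 0 < κ) : IsTrajectory P (κ • X) := by
  obtain ⟨hnij0, hNd0, hn0, hnij, hn, hNd⟩ := hX
  refine ⟨fun i j c => ?_, fun i j c => ?_, fun i c => ?_, fun t i j c => ?_, fun t i c => ?_,
    fun t i j c => ?_⟩
  · simp [hnij0]
  · simp [hNd0]
  · simpa using mul_nonneg hκ.le (hn0 i c)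
  · simp only [Traj.smul_n, Traj.smul_nij, Traj.smul_Nd, Pi.smul_apply, smul_eq_mul,
      transition_smul P hκ, hnij, mul_assoc]
  · have hmax : max 0 (κ * X.total 0 - κ * X.total t) = κ * max 0 (X.total 0 - X.total t) := by
      rw [← mul_sub, mul_max_of_nonneg _ _ hκ.le, mul_zero]
    simp only [Traj.smul_n, Traj.smul_nij, Pi.smul_apply, smul_eq_mul, Traj.total_smul, hmax]
    rw [hn, mul_add, Finset.mul_sum, mul_left_comm]
  · simp only [Traj.smul_Nd, Traj.smul_nij, Pi.smul_apply, smul_eq_mul, hNd, mul_add]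

lemma eq_of_n_zero (hX : IsTrajectory P X) (hY : IsTrajectory P Y) (h0 : X.n 0 = Y.n 0) :
    ∀ t, X.n t = Y.n t ∧ X.nij t = Y.nij t ∧ X.Nd t = Y.Nd t := by
  obtain ⟨hXnij0, hXNd0, -, hXnij, hXn, hXNd⟩ := hX
  obtain ⟨hYnij0, hYNd0, -, hYnij, hYn, hYNd⟩ := hY
  have htotal0 : X.total 0 = Y.total 0 := by simp only [Traj.total, h0]
  intro t
  induction t with
  | zero => exact ⟨h0, by ext; simp [hXnij0, hYnij0], by ext; simp [hXNd0, hYNd0]⟩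
  | succ t ih =>
    obtain ⟨hn, -, hNd⟩ := ih
    have hnij' : X.nij (t + 1) = Y.nij (t + 1) := by ext; simp only [hXnij, hYnij, hn, hNd]
    have htotal : X.total t = Y.total t := by simp only [Traj.total, hn]
    refine ⟨?_, hnij', ?_⟩
    · ext; simp only [hXn, hYn, hnij', htotal0, htotal]
    · ext; simp only [hXNd, hYNd, hNd, hnij']

end IsTrajectory

theorem systemX_asymptotic_equivalence_general (P : SysParams V C) (E X : Traj V C)
    (κ : ℝ) (hκ : 0 < κ)
    (hE : IsTrajectory P E) (hX : IsTrajectory P X)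
    (h0 : ∀ i c, X.n 0 i c = κ * E.n 0 i c) :
    ∀ t (i j : V) (c : Fin C),
      X.n t i c = κ * E.n t i c ∧
      X.nij t i j c = κ * E.nij t i j c ∧
      X.Nd t i j c = κ * E.Nd t i j c := by
  intro t i j c
  obtain ⟨hn, hnij, hNd⟩ := hX.eq_of_n_zero (hE.smul hκ) (funext₂ h0) t
  exact ⟨congrFun₂ hn i c, congrFun₃ hnij i j c, congrFun₃ hNd i j c⟩

/-- **Asymptotic equivalence reduction (Theorem 1).** Suppose the nonnegative
sequences `(e_i^c(t), e_{ij}^c(t), E_{ij}^c(t))` — the expected values of the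
stochastic system `X̃` under the convergence hypotheses of Theorem 1 — satisfy
exactly the recurrence equations of system X (encoded by `IsTrajectory P E`
together with nonnegativity).  If `(n, n_{ij}, N_{ij})` is the trajectory of
system X started from `n_i^c(0) = κ · e_i^c(0)` for some `κ > 0`, then for all
times `t`, vertices `i, j` and classes `c` we have `n_i^c(t) = κ e_i^c(t)`,
`n_{ij}^c(t) = κ e_{ij}^c(t)` and `N_{ij}^c(t) = κ E_{ij}^c(t)`. -/
theorem systemX_asymptotic_equivalence (P : SysParams V C) (E X : Traj V C)
    (κ : ℝ) (hκ : 0 < κ)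
    (hE : IsTrajectory P E) (hX : IsTrajectory P X)
    (hEnonneg : ∀ t (i j : V) (c : Fin C),
      0 ≤ E.n t i c ∧ 0 ≤ E.nij t i j c ∧ 0 ≤ E.Nd t i j c)
    (h0 : ∀ i c, X.n 0 i c = κ * E.n 0 i c) :
    ∀ t (i j : V) (c : Fin C),
      X.n t i c = κ * E.n t i c ∧
      X.nij t i j c = κ * E.nij t i j c ∧
      X.Nd t i j c = κ * E.Nd t i j c :=
  systemX_asymptotic_equivalence_general P E X κ hκ hE hX h0
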